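/- arXiv:1802.02055 — 5 statements merged into one kernel-verified Lean document; each statement's English description precedes it below -/
import Mathlib

section
/- Let p : ℕ → ℕ be a bijection each of whose orbits is finite (p is a disjoint union of finite cycles). Then for every A ⊆ ℕ, if p[A] ∖ A is finite then A ∖ p[A] is finite. (This is the statement that the induced homeomorphism p* of ℕ* is chain recurrent: for every clopen U ⊆ ℕ*, p*[U] is not a proper subset of U.) -/
/-- If `p : ℕ → ℕ` is a bijection each of whose orbits is finite (a disjoint union of finite
cycles), then for every `A ⊆ ℕ`, if `p[A] ∖ A` is finite then `A ∖ p[A]` is finite.  (This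
says that the induced homeomorphism `p*` of `ℕ*` is chain recurrent.) -/
theorem finite_cycles_chain_recurrent (p : ℕ → ℕ) (hbij : Function.Bijective p)
    (horb : ∀ n : ℕ, (Set.range fun k : ℕ => p^[k] n).Finite) :
    ∀ A : Set ℕ, ((p '' A) \ A).Finite → (A \ (p '' A)).Finite := by
  classical
  intro A hA
  have hinj := hbij.injective
  -- every point is periodic
  have hper : ∀ n : ℕ, ∃ k, 0 < k ∧ p^[k] n = n := by
    intro n
    have hninj : ¬ Function.Injective (fun k : ℕ => p^[k] n) := by
      intro h
      exact (Set.infinite_range_of_injective h) (horb n)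
    rw [Function.not_injective_iff] at hninj
    obtain ⟨i, j, heq, hne⟩ := hninj
    rcases Nat.lt_or_ge i j with h | h
    · refine ⟨j - i, Nat.sub_pos_of_lt h, hinj.iterate i ?_⟩
      rw [← Function.iterate_add_apply, Nat.add_sub_cancel' h.le]
      exact heq.symm
    · have h' : j < i := lt_of_le_of_ne h (Ne.symm hne)
      refine ⟨i - j, Nat.sub_pos_of_lt h', hinj.iterate j ?_⟩
      rw [← Function.iterate_add_apply, Nat.add_sub_cancel' h'.le]
      exact heq
  set S : Set ℕ := A \ (p '' A) with hS
  -- for x ∈ S there is a first exit time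
  have hex : ∀ x ∈ S, ∃ j, 0 < j ∧ p^[j] x ∉ A := by
    intro x hx
    obtain ⟨k, hk, hkx⟩ := hper x
    have h1 : p^[k - 1] x ∉ A := by
      intro h
      refine hx.2 ⟨p^[k - 1] x, h, ?_⟩
      rw [← Function.iterate_succ_apply' p (k-1) x, Nat.succ_eq_add_one, Nat.sub_add_cancel hk, hkx]
    refine ⟨k - 1, Nat.pos_of_ne_zero fun h0 => ?_, h1⟩
    rw [h0] at h1
    exact h1 hx.1
  -- the first-exit map
  set d : ℕ → ℕ := fun x => if h : ∃ j, 0 < j ∧ p^[j] x ∉ A then Nat.find h else 0 with hd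
  set f : ℕ → ℕ := fun x => p^[d x] x with hf
  have hdspec : ∀ x ∈ S, 0 < d x ∧ p^[d x] x ∉ A := by
    intro x hx
    have h := hex x hx
    simp only [hd, dif_pos h]
    exact Nat.find_spec h
  have hdmin : ∀ x ∈ S, ∀ m, m < d x → p^[m] x ∈ A := by
    intro x hx m hm
    rcases Nat.eq_zero_or_pos m with h0 | h0
    · simpa [h0] using hx.1
    · have h := hex x hx
      simp only [hd, dif_pos h] at hm
      have := Nat.find_min h hm
      push_neg at this
      exact this h0
  -- f maps S into (p '' A) \ A
  have hmaps : ∀ x ∈ S, f x ∈ (p '' A) \ A := by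
    intro x hx
    obtain ⟨hpos, hout⟩ := hdspec x hx
    refine ⟨⟨p^[d x - 1] x, hdmin x hx _ (Nat.sub_lt hpos one_pos), ?_⟩, hout⟩
    show p (p^[d x - 1] x) = f x
    rw [hf, ← Function.iterate_succ_apply' p (d x - 1) x, Nat.succ_eq_add_one, Nat.sub_add_cancel hpos]
  -- key injectivity step
  have hkey : ∀ x ∈ S, ∀ y ∈ S, d x ≤ d y → f x = f y → x = y := by
    intro x hx y hy hle heq
    have hxy : x = p^[d y - d x] y := by
      apply hinj.iterate (d x)
      rw [← Function.iterate_add_apply, Nat.add_sub_cancel' hle]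
      exact heq
    rcases Nat.eq_zero_or_pos (d y - d x) with h0 | h0
    · rw [hxy, h0, Function.iterate_zero_apply]
    · exfalso
      have hlt : d y - d x - 1 < d y := by
        have : d y - d x ≤ d y := Nat.sub_le _ _
        omega
      have hin : p^[d y - d x - 1] y ∈ A := hdmin y hy _ hlt
      refine hx.2 ⟨p^[d y - d x - 1] y, hin, ?_⟩
      rw [← Function.iterate_succ_apply' p (d y - d x - 1) y, Nat.succ_eq_add_one, Nat.sub_add_cancel h0, ← hxy]
  have hinjOn : Set.InjOn f S := by
    intro x hx y hy heq
    rcases le_total (d x) (d y) with h | h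
    · exact hkey x hx y hy h heq
    · exact (hkey y hy x hx h heq.symm).symm
  have himg : (f '' S).Finite := hA.subset (Set.image_subset_iff.2 hmaps)
  exact Set.Finite.of_finite_image himg hinjOn
end

section
/- For every homeomorphism φ : ℕ* → ℕ* there is a subquotient mapping from βz to φ: there exists a continuous (not necessarily surjective) map q from the space of all ultrafilters on ℤ to ℕ* such that q(z(U)) = φ(q(U)) for every ultrafilter U on ℤ, where z(U) denotes the pushforward of U under the map z(n) = n+1. In fact, for any fixed free ultrafilter U₀ on ℕ, the map q(U) = U-lim_{n∈ℤ} φⁿ(U₀) is such a map. -/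
open Filter Topology

/-- The space of free (non-principal) ultrafilters on `D`, with the subspace
topology inherited from the space of all ultrafilters on `D`. -/
abbrev FreeUF (D : Type*) := {U : Ultrafilter D // (U : Filter D) ≤ Filter.cofinite}

lemma finiteToOne_of_injective {D E : Type*} {f : D → E} (hf : Function.Injective f) (e : E) :
    (f ⁻¹' {e}).Finite := by
  apply Set.Subsingleton.finite
  intro a ha b hb
  simp only [Set.mem_preimage, Set.mem_singleton_iff] at ha hb
  exact hf (ha.trans hb.symm)

lemma map_le_cofinite {D : Type*} {f : D → D} (hf : ∀ d : D, (f ⁻¹' {d}).Finite)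
    {U : Ultrafilter D} (hU : (U : Filter D) ≤ Filter.cofinite) :
    (Ultrafilter.map f U : Filter D) ≤ Filter.cofinite := by
  rw [Filter.le_cofinite_iff_compl_singleton_mem]
  intro x
  have h1 : (f ⁻¹' {x})ᶜ ∈ (U : Filter D) := hU ((hf x).compl_mem_cofinite)
  rw [Ultrafilter.coe_map, Filter.mem_map]
  simpa [Set.preimage_compl] using h1

/-- The trivial map `f*` on free ultrafilters induced by a finite-to-one map `f`,
sending an ultrafilter to its pushforward. -/
def ufMap {D : Type*} (f : D → D) (hf : ∀ d : D, (f ⁻¹' {d}).Finite) (U : FreeUF D) :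
    FreeUF D :=
  ⟨Ultrafilter.map f U.1, map_le_cofinite hf U.2⟩

/-- `X` has weight at most `c`: it has a topological basis of cardinality at most `c`. -/
def HasWeightLE (X : Type) [TopologicalSpace X] (c : Cardinal) : Prop :=
  ∃ B : Set (Set X), TopologicalSpace.IsTopologicalBasis B ∧ Cardinal.mk B ≤ c


instance freeUF_compact (D : Type*) : CompactSpace (FreeUF D) := by
  have hcl : IsClosed {U : Ultrafilter D | (U : Filter D) ≤ Filter.cofinite} := by
    have : {U : Ultrafilter D | (U : Filter D) ≤ Filter.cofinite} =
        ⋂ x : D, {U : Ultrafilter D | ({x}ᶜ : Set D) ∈ U} := by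
      ext U
      simp [Filter.le_cofinite_iff_compl_singleton_mem]
    rw [this]
    exact isClosed_iInter fun x => ultrafilter_isClosed_basic _
  exact isCompact_iff_compactSpace.mp hcl.isCompact

/-- For every homeomorphism `φ` of `ℕ*` and every free ultrafilter `U₀` on `ℕ`, there is a
subquotient mapping from `βz` to `φ`: a continuous map `q` from the space of all
ultrafilters on `ℤ` to `ℕ*` with `q (z U) = φ (q U)`, where `z` is pushforward along
`n ↦ n + 1`; indeed, `q U = U-lim_{n ∈ ℤ} φⁿ U₀` is such a map (the last clause states that
`q U` is the `U`-limit of the orbit `n ↦ φⁿ U₀`). -/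
theorem subquotient_from_beta_z (φ : FreeUF ℕ ≃ₜ FreeUF ℕ) (U₀ : FreeUF ℕ) :
    ∃ q : Ultrafilter ℤ → FreeUF ℕ, Continuous q ∧
      (∀ U : Ultrafilter ℤ, q (Ultrafilter.map (fun n : ℤ => n + 1) U) = φ (q U)) ∧
      (∀ U : Ultrafilter ℤ,
        Filter.Tendsto (fun n : ℤ => (φ.toEquiv ^ n) U₀) (U : Filter ℤ) (nhds (q U))) := by

  have : Nonempty (FreeUF ℕ) := ⟨U₀⟩
  set f : ℤ → FreeUF ℕ := fun n => (φ.toEquiv ^ n) U₀ with hf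
  refine ⟨Ultrafilter.extend f, continuous_ultrafilter_extend f, ?_, ?_⟩
  · intro U
    have h1 : Tendsto f (U : Filter ℤ) (𝓝 (Ultrafilter.extend f U)) := by
      have := (ultrafilter_extend_eq_iff (f := f) (b := U)
        (c := Ultrafilter.extend f U)).mp rfl
      rwa [Ultrafilter.coe_map] at this
    have h2 : Tendsto (fun n : ℤ => f (n + 1)) (U : Filter ℤ)
        (𝓝 (φ (Ultrafilter.extend f U))) := by
      have hcomp : (fun n : ℤ => f (n + 1)) = fun n : ℤ => φ (f n) := by
        funext n
        simp only [hf]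
        rw [show n + 1 = 1 + n from add_comm n 1, zpow_one_add, Equiv.Perm.mul_apply]
        rfl
      rw [hcomp]
      exact (φ.continuous.tendsto _).comp h1
    have h3 : Tendsto f (Ultrafilter.map (fun n : ℤ => n + 1) U : Filter ℤ)
        (𝓝 (φ (Ultrafilter.extend f U))) := by
      rw [Ultrafilter.coe_map]
      exact h2
    rw [ultrafilter_extend_eq_iff]
    rw [Ultrafilter.coe_map]
    exact h3
  · intro U
    have := (ultrafilter_extend_eq_iff (f := f) (b := U)
      (c := Ultrafilter.extend f U)).mp rfl
    rwa [Ultrafilter.coe_map] at this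
end

section
/- Let z : ℤ → ℤ be z(n) = n+1 and s : ℕ → ℕ be s(n) = n+1, inducing homeomorphisms z* of ℤ* and s* of ℕ*. Then both s* and (s*)⁻¹ are quotients of z*: there exist continuous surjections Q₊ : ℤ* → ℕ* and Q₋ : ℤ* → ℕ* such that Q₊ ∘ z* = s* ∘ Q₊ and Q₋ ∘ z* = (s*)⁻¹ ∘ Q₋. -/
open Filter Topology

lemma succ_injective' : Function.Injective (fun n : ℕ => n + 1) :=
  fun _ _ h => Nat.succ_injective h

lemma zsucc_injective : Function.Injective (fun n : ℤ => n + 1) :=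
  add_left_injective 1

/-- The shift map `s*` on `ℕ*`, induced by `s(n) = n + 1`. -/
def sStar : FreeUF ℕ → FreeUF ℕ :=
  ufMap (fun n : ℕ => n + 1) (finiteToOne_of_injective succ_injective')

/-- The trivial homeomorphism `z*` of `ℤ*`, induced by `z(n) = n + 1`. -/
def zStar : FreeUF ℤ → FreeUF ℤ :=
  ufMap (fun n : ℤ => n + 1) (finiteToOne_of_injective zsucc_injective)


section Aux

lemma uf_mem_bind {α β : Type*} {f : Ultrafilter α} {m : α → Ultrafilter β} {s : Set β} :
    s ∈ f.bind m ↔ {a | s ∈ m a} ∈ f := Iff.rfl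

lemma uf_map_congr {α β : Type*} {f g : α → β} {U : Ultrafilter α}
    (h : {x | f x = g x} ∈ U) : Ultrafilter.map f U = Ultrafilter.map g U := by
  apply Ultrafilter.coe_injective
  exact Filter.map_congr (by exact h)

lemma uf_mem_of_finite_diff {α : Type*} {U : Ultrafilter α} (hU : (U : Filter α) ≤ cofinite)
    {s t : Set α} (hfin : (s \ t).Finite) (hs : s ∈ U) : t ∈ U := by
  have h1 : (s \ t)ᶜ ∈ U := hU hfin.compl_mem_cofinite
  filter_upwards [hs, h1] with x hx1 hx2
  simp [Set.mem_diff] at hx2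
  exact hx2 hx1

lemma continuous_of_basic {α β : Type*} {F : Ultrafilter α → Ultrafilter β}
    (h : ∀ A : Set β, ∃ B : Set α, F ⁻¹' {u | A ∈ u} = {u | B ∈ u}) : Continuous F := by
  rw [ultrafilterBasis_is_basis.continuous_iff]
  rintro s ⟨A, rfl⟩
  obtain ⟨B, hB⟩ := h A
  rw [hB]
  exact ultrafilter_isOpen_basic B

lemma continuous_uf_map {α β : Type*} (f : α → β) :
    Continuous (Ultrafilter.map f) :=
  continuous_of_basic fun A => ⟨f ⁻¹' A, by ext u; simp [Ultrafilter.mem_map]⟩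

/-- A fixed free ultrafilter on ℕ. -/
noncomputable def W0 : Ultrafilter ℕ := Ultrafilter.of Filter.cofinite

lemma W0_free : (W0 : Filter ℕ) ≤ Filter.cofinite := Ultrafilter.of_le _

def npred : ℕ → ℕ := fun n => n - 1

lemma npred_fto : ∀ d : ℕ, (npred ⁻¹' {d}).Finite := by
  intro d
  apply Set.Finite.subset (Set.finite_Icc 0 (d+1))
  intro m hm
  simp only [Set.mem_preimage, Set.mem_singleton_iff, npred] at hm
  simp [Set.mem_Icc]; omega

lemma predIter_free (k : ℕ) :
    (((Ultrafilter.map npred)^[k] W0 : Ultrafilter ℕ) : Filter ℕ) ≤ Filter.cofinite := by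
  induction k with
  | zero => exact W0_free
  | succ n ih =>
      rw [Function.iterate_succ_apply']
      rw [Filter.le_cofinite_iff_compl_singleton_mem]
      intro x
      have h1 : (npred ⁻¹' {x})ᶜ ∈ ((Ultrafilter.map npred)^[n] W0 : Ultrafilter ℕ) := by
        apply ih
        exact (npred_fto x).compl_mem_cofinite
      rw [Ultrafilter.mem_coe, Ultrafilter.mem_map]
      simpa [Set.preimage_compl] using h1

/-- The bi-infinite orbit of ultrafilters: principal at nonnegative points,
backward shifts of `W0` at negative points. -/
noncomputable def Xseq : ℤ → Ultrafilter ℕ := fun n =>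
  if 0 ≤ n then pure n.toNat else (Ultrafilter.map npred)^[(-n).toNat] W0

lemma Xseq_free {n : ℤ} (hn : n < 0) : ((Xseq n : Ultrafilter ℕ) : Filter ℕ) ≤ Filter.cofinite := by
  rw [Xseq, if_neg (by omega)]
  exact predIter_free _

lemma Xseq_shift {n : ℤ} (hn : n ≠ -1) :
    Xseq (n + 1) = Ultrafilter.map (fun m : ℕ => m + 1) (Xseq n) := by
  rcases le_or_gt 0 n with h | h
  · rw [Xseq, Xseq, if_pos (by omega), if_pos h, Ultrafilter.map_pure]
    congr 1
    omega
  · have h2 : n + 1 < 0 := by omega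
    rw [Xseq, Xseq, if_neg (by omega), if_neg (by omega)]
    have hk : (-n).toNat = (-(n+1)).toNat + 1 := by omega
    rw [hk, Function.iterate_succ_apply']
    rw [Ultrafilter.map_map]
    symm
    have := uf_map_congr (f := (fun m : ℕ => m + 1) ∘ npred) (g := id)
      (U := (Ultrafilter.map npred)^[(-(n+1)).toNat] W0) ?_
    · rw [this, Ultrafilter.map_id]
    · apply predIter_free
      have : {x : ℕ | 1 ≤ x} ⊆ {x : ℕ | ((fun m : ℕ => m + 1) ∘ npred) x = id x} := by
        intro x hx
        simp only [Set.mem_setOf_eq, Function.comp, npred, id] at *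
        omega
      apply Filter.mem_of_superset _ this
      simp only [Filter.mem_cofinite]
      apply Set.Finite.subset (Set.finite_Icc 0 1)
      intro x hx
      simp only [Set.mem_compl_iff, Set.mem_setOf_eq, Set.mem_Icc] at *
      omega

end Aux
section Main

noncomputable def Qp0 : Ultrafilter ℤ → Ultrafilter ℕ := fun U => U.bind Xseq

lemma Qp0_free {U : Ultrafilter ℤ} (hU : (U : Filter ℤ) ≤ Filter.cofinite) :
    ((Qp0 U) : Filter ℕ) ≤ Filter.cofinite := by
  rw [Filter.le_cofinite_iff_compl_singleton_mem]
  intro x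
  rw [Ultrafilter.mem_coe]
  show {n : ℤ | ({x}ᶜ : Set ℕ) ∈ Xseq n} ∈ U
  apply Filter.mem_of_superset (hU (Set.finite_singleton ((x : ℤ))).compl_mem_cofinite)
  intro n hn
  simp only [Set.mem_compl_iff, Set.mem_singleton_iff] at hn
  by_cases h0 : 0 ≤ n
  · simp only [Set.mem_setOf_eq, Xseq, if_pos h0, Ultrafilter.mem_pure,
      Set.mem_compl_iff, Set.mem_singleton_iff]
    omega
  · exact (Xseq_free (by omega)) ((Set.finite_singleton x).compl_mem_cofinite)

lemma Qp0_equiv {U : Ultrafilter ℤ} (hU : (U : Filter ℤ) ≤ Filter.cofinite) :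
    Qp0 (Ultrafilter.map (fun n : ℤ => n + 1) U) =
      Ultrafilter.map (fun m : ℕ => m + 1) (Qp0 U) := by
  ext A
  rw [Ultrafilter.mem_map]
  show {n : ℤ | A ∈ Xseq n} ∈ Ultrafilter.map (fun n : ℤ => n + 1) U ↔
    {n : ℤ | (fun m : ℕ => m + 1) ⁻¹' A ∈ Xseq n} ∈ U
  rw [Ultrafilter.mem_map]
  have key : ∀ n : ℤ, n ≠ -1 →
      (n ∈ (fun n : ℤ => n + 1) ⁻¹' {n : ℤ | A ∈ Xseq n} ↔
       n ∈ {n : ℤ | (fun m : ℕ => m + 1) ⁻¹' A ∈ Xseq n}) := by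
    intro n hn
    simp only [Set.mem_preimage, Set.mem_setOf_eq, Xseq_shift hn, Ultrafilter.mem_map]
  constructor <;> intro h
  · exact uf_mem_of_finite_diff hU
      (Set.Finite.subset (Set.finite_singleton (-1)) (by
        intro n hn
        rcases hn with ⟨h1, h2⟩
        by_contra hne
        exact h2 ((key n (by simpa using hne)).1 h1))) h
  · exact uf_mem_of_finite_diff hU
      (Set.Finite.subset (Set.finite_singleton (-1)) (by
        intro n hn
        rcases hn with ⟨h1, h2⟩
        by_contra hne
        exact h2 ((key n (by simpa using hne)).2 h1))) h

lemma Qp0_section (V : Ultrafilter ℕ) :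
    Qp0 (Ultrafilter.map (fun m : ℕ => (m : ℤ)) V) = V := by
  ext A
  show {n : ℤ | A ∈ Xseq n} ∈ Ultrafilter.map (fun m : ℕ => (m : ℤ)) V ↔ A ∈ V
  rw [Ultrafilter.mem_map]
  have : (fun m : ℕ => (m : ℤ)) ⁻¹' {n : ℤ | A ∈ Xseq n} = A := by
    ext m
    simp [Xseq, Ultrafilter.mem_pure]
  rw [this]

lemma natCast_free {V : Ultrafilter ℕ} (hV : (V : Filter ℕ) ≤ Filter.cofinite) :
    ((Ultrafilter.map (fun m : ℕ => (m : ℤ)) V : Ultrafilter ℤ) : Filter ℤ) ≤ Filter.cofinite := by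
  rw [Filter.le_cofinite_iff_compl_singleton_mem]
  intro x
  rw [Ultrafilter.mem_coe, Ultrafilter.mem_map]
  apply hV
  rw [Filter.mem_cofinite, Set.preimage_compl, compl_compl]
  apply Set.Finite.subset (Set.finite_singleton x.toNat)
  intro m hm
  simp only [Set.mem_preimage, Set.mem_singleton_iff] at *
  omega

end Main

/-- Both `s*` and its inverse are quotients of `z*`: there are continuous surjections
`Q₊ Q₋ : ℤ* → ℕ*` with `Q₊ ∘ z* = s* ∘ Q₊` and `Q₋ ∘ z* = (s*)⁻¹ ∘ Q₋` (the latter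
expressed, since `s*` is injective, as `s* ∘ Q₋ ∘ z* = Q₋`). -/
theorem shift_and_inverse_quotients_of_zstar :
    ∃ Qp Qm : FreeUF ℤ → FreeUF ℕ,
      Continuous Qp ∧ Function.Surjective Qp ∧
      Continuous Qm ∧ Function.Surjective Qm ∧
      (∀ U : FreeUF ℤ, Qp (zStar U) = sStar (Qp U)) ∧
      (∀ U : FreeUF ℤ, sStar (Qm (zStar U)) = Qm U) := by
  have hcont : Continuous Qp0 := continuous_of_basic fun A => ⟨{n : ℤ | A ∈ Xseq n}, rfl⟩
  have zpred_inj : Function.Injective (fun n : ℤ => n - 1) := fun a b h => by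
    have : a - 1 = b - 1 := h
    omega
  refine ⟨fun U => ⟨Qp0 U.1, Qp0_free U.2⟩,
    (fun U => ⟨Qp0 U.1, Qp0_free U.2⟩) ∘
      ufMap (fun n : ℤ => -n) (finiteToOne_of_injective neg_injective), ?_, ?_, ?_, ?_, ?_, ?_⟩
  · exact (hcont.comp continuous_subtype_val).subtype_mk _
  · intro V
    exact ⟨⟨Ultrafilter.map (fun m : ℕ => (m : ℤ)) V.1, natCast_free V.2⟩,
      Subtype.ext (Qp0_section V.1)⟩
  · exact ((hcont.comp continuous_subtype_val).subtype_mk _).comp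
      (((continuous_uf_map _).comp continuous_subtype_val).subtype_mk _)
  · intro V
    obtain ⟨U, hU⟩ : ∃ U : FreeUF ℤ, (⟨Qp0 U.1, Qp0_free U.2⟩ : FreeUF ℕ) = V :=
      ⟨⟨Ultrafilter.map (fun m : ℕ => (m : ℤ)) V.1, natCast_free V.2⟩,
        Subtype.ext (Qp0_section V.1)⟩
    refine ⟨ufMap (fun n : ℤ => -n) (finiteToOne_of_injective neg_injective) U, ?_⟩
    have hNN : ufMap (fun n : ℤ => -n) (finiteToOne_of_injective neg_injective)
        (ufMap (fun n : ℤ => -n) (finiteToOne_of_injective neg_injective) U) = U := by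
      apply Subtype.ext
      show Ultrafilter.map _ (Ultrafilter.map _ U.1) = U.1
      rw [Ultrafilter.map_map]
      have : ((fun n : ℤ => -n) ∘ fun n : ℤ => -n) = id := funext fun n => neg_neg n
      rw [this, Ultrafilter.map_id]
    simp only [Function.comp_apply, hNN, hU]
  · intro U
    exact Subtype.ext (Qp0_equiv U.2)
  · intro U
    apply Subtype.ext
    have h1 : (ufMap (fun n : ℤ => -n) (finiteToOne_of_injective neg_injective) (zStar U)).1 =
        Ultrafilter.map (fun n : ℤ => n - 1)
          (ufMap (fun n : ℤ => -n) (finiteToOne_of_injective neg_injective) U).1 := by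
      show Ultrafilter.map _ (Ultrafilter.map _ U.1) = Ultrafilter.map _ (Ultrafilter.map _ U.1)
      rw [Ultrafilter.map_map, Ultrafilter.map_map]
      congr 1
      funext n
      show -(n + 1) = -n - 1
      ring
    show Ultrafilter.map (fun m : ℕ => m + 1) (Qp0 _) = Qp0 _
    rw [h1]
    have hfree : ((Ultrafilter.map (fun n : ℤ => n - 1)
        (ufMap (fun n : ℤ => -n) (finiteToOne_of_injective neg_injective) U).1 :
          Ultrafilter ℤ) : Filter ℤ) ≤ Filter.cofinite :=
      map_le_cofinite (finiteToOne_of_injective zpred_inj)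
        (ufMap (fun n : ℤ => -n) (finiteToOne_of_injective neg_injective) U).2
    rw [← Qp0_equiv hfree]
    congr 1
    rw [Ultrafilter.map_map]
    have : ((fun n : ℤ => n + 1) ∘ fun n : ℤ => n - 1) = id := funext fun n => by
      show n - 1 + 1 = n; ring
    rw [this, Ultrafilter.map_id]
end

section
/- For every mod-finite permutation p of ℕ, at least one of the following holds: (a) p* is a quotient of t*, where t : ℕ × ℤ → ℕ × ℤ is t(n,z) = (n,z+1), i.e., there is a continuous surjection Q : (ℕ × ℤ)* → ℕ* with Q ∘ t* = p* ∘ Q; or (b) p* is a quotient of (t ∨ r)*, where t ∨ r is the bijection of the disjoint union (ℕ × ℤ) ⊔ D_r acting as t on ℕ × ℤ and as r on D_r, i.e., there is a continuous surjection Q : ((ℕ × ℤ) ⊔ D_r)* → ℕ* with Q ∘ (t ∨ r)* = p* ∘ Q. (This is a ZFC theorem; dually, every trivial automorphism of P(ω)/fin embeds in t^↑ or in (t ∨ r)^↑.) -/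
open Filter Topology

/-- The index set `D_r = {(n,m) : n ≥ 1, 0 ≤ m < n!}`. -/
abbrev Dr : Type := {q : ℕ × ℕ // 1 ≤ q.1 ∧ q.2 < Nat.factorial q.1}

/-- The permutation `r(n,m) = (n, m+1 mod n!)` of `D_r`: a disjoint union of finite cycles,
one of length `n!` for each `n ≥ 1`. -/
def rcyc : Dr → Dr := fun q =>
  ⟨(q.1.1, (q.1.2 + 1) % Nat.factorial q.1.1), q.2.1, Nat.mod_lt _ (Nat.factorial_pos _)⟩

lemma succ_mod_eq {N : ℕ} : ∀ k : ℕ, k < N → (k + 1) % N = if k + 1 = N then 0 else k + 1 := by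
  intro k hk
  rcases eq_or_lt_of_le (show k + 1 ≤ N from hk) with h1 | h1
  · rw [if_pos h1, h1, Nat.mod_self]
  · rw [if_neg (by omega), Nat.mod_eq_of_lt h1]

lemma succ_mod_inj {N m m' : ℕ} (hm : m < N) (hm' : m' < N)
    (h : (m + 1) % N = (m' + 1) % N) : m = m' := by
  rw [succ_mod_eq m hm, succ_mod_eq m' hm'] at h
  split_ifs at h <;> omega

lemma rcyc_injective : Function.Injective rcyc := by
  rintro ⟨⟨n, m⟩, h1, h2⟩ ⟨⟨n', m'⟩, h1', h2'⟩ h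
  simp only [rcyc, Subtype.mk.injEq, Prod.mk.injEq] at h
  obtain ⟨hn, hm⟩ := h
  subst hn
  simp only [Subtype.mk.injEq, Prod.mk.injEq]
  exact ⟨trivial, succ_mod_inj h2 h2' hm⟩

/-- The map `t(n,z) = (n, z+1)` on `ℕ × ℤ`. -/
def tmap : ℕ × ℤ → ℕ × ℤ := fun p => (p.1, p.2 + 1)

lemma tmap_injective : Function.Injective tmap := by
  rintro ⟨a, m⟩ ⟨b, n⟩ h
  simp only [tmap, Prod.mk.injEq] at h ⊢
  exact ⟨h.1, by omega⟩

/-!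
Write `p*` and `g*` for the trivial maps. A quotient map `Y* → ℕ*` is built as `U ↦ U.bind ν`
for a map `ν : Y → Ultrafilter ℕ`. This is continuous; it lands in `ℕ*` when each singleton
belongs to only finitely many `ν y`; it intertwines `g*` and `p*` when `p(ν y) = ν (g y)` for all
but finitely many `y`; and, `Y*` being compact, it is onto as soon as every infinite set lies in
infinitely many `ν y`, since then its range is dense.

Outside the periodic points and a finite set, `p` is injective without cycles, so it moves the
non-periodic points along chains as a partial shift. Coordinates along the chains (a chosen base
point and the signed distance from it) embed them in `ℕ × ℤ`, turning `p` into `t` up to finitely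
many points; each remaining point `(r, z)` is sent to `(p*)^z W` for a fixed `W ∈ ℕ*`. If `p` has
infinitely many periodic points, they are placed on `D_r`: the cycle of `r` at level `n`, of
length `n!`, runs around the orbit of a periodic point whose period is at most `n` and therefore
divides `n!`, each periodic point being used on at least one and finitely many levels.
-/

open Set Function

section FreeUltrafilters

variable {α : Type*}

lemma notMem_of_le_cofinite {U : Ultrafilter α} (hU : (U : Filter α) ≤ cofinite) {s : Set α}
    (hs : s.Finite) : s ∉ U :=
  Ultrafilter.compl_mem_iff_notMem.mp (hU hs.compl_mem_cofinite)

lemma exists_freeUF_mem {s : Set α} (hs : s.Infinite) : ∃ U : FreeUF α, s ∈ U.1 :=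
  have := hs.cofinite_inf_principal_neBot
  ⟨⟨.of (cofinite ⊓ 𝓟 s), (Ultrafilter.of_le _).trans inf_le_left⟩,
    Ultrafilter.of_le _ (mem_inf_of_right (mem_principal_self s))⟩

lemma isClosed_setOf_le_cofinite : IsClosed {U : Ultrafilter α | (U : Filter α) ≤ cofinite} := by
  simp only [le_cofinite_iff_compl_singleton_mem, ofPred_forall]
  exact isClosed_iInter fun a => ultrafilter_isClosed_basic _

instance : CompactSpace (FreeUF α) :=
  isCompact_iff_compactSpace.mp isClosed_setOf_le_cofinite.isCompact

lemma ufMap_ufMap_of_eventually_eq {f g : α → α} (hf : ∀ a, (f ⁻¹' {a}).Finite)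
    (hg : ∀ a, (g ⁻¹' {a}).Finite) (hgf : ∀ᶠ a in cofinite, g (f a) = a) (U : FreeUF α) :
    ufMap g hg (ufMap f hf U) = U := by
  refine Subtype.ext (Ultrafilter.coe_injective ?_)
  change Filter.map g (Filter.map f U.1) = U.1
  rw [Filter.map_map, Filter.map_congr (m₁ := g ∘ f) (m₂ := id) (U.2 hgf), Filter.map_id]

def ufMapPerm {f g : α → α} (hf : ∀ a, (f ⁻¹' {a}).Finite) (hg : ∀ a, (g ⁻¹' {a}).Finite)
    (hgf : ∀ᶠ a in cofinite, g (f a) = a) (hfg : ∀ᶠ a in cofinite, f (g a) = a) :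
    Equiv.Perm (FreeUF α) where
  toFun := ufMap f hf
  invFun := ufMap g hg
  left_inv := ufMap_ufMap_of_eventually_eq hf hg hgf
  right_inv := ufMap_ufMap_of_eventually_eq hg hf hfg

end FreeUltrafilters

section UltrafilterBind

variable {X Y : Type*}

/-- The last condition is asked only of sets meeting `S` in an infinite set, so that kernels
handling complementary parts of `X` can be glued (`QuotientKernel.sumElim`). -/
structure QuotientKernel (g : Y → Y) (p : X → X) (S : Set X) (ν : Y → Ultrafilter X) : Prop where
  finite_singleton_mem : ∀ x, {y | {x} ∈ ν y}.Finite
  finite_map_ne : {y | Ultrafilter.map p (ν y) ≠ ν (g y)}.Finite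
  infinite_mem : ∀ s : Set X, (s ∩ S).Infinite → {y | s ∈ ν y}.Infinite

def ufBind (ν : Y → Ultrafilter X) (hν : ∀ x, {y | {x} ∈ ν y}.Finite) (U : FreeUF Y) :
    FreeUF X :=
  ⟨U.1.bind ν, le_cofinite_iff_compl_singleton_mem.mpr fun x =>
    U.2 <| eventually_cofinite.mpr <| by simpa [Ultrafilter.compl_mem_iff_notMem] using hν x⟩

variable {ν : Y → Ultrafilter X} (hν : ∀ x, {y | {x} ∈ ν y}.Finite)

lemma continuous_ufBind : Continuous (ufBind ν hν) := by
  refine Continuous.subtype_mk (ultrafilterBasis_is_basis.continuous_iff.mpr ?_) _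
  rintro _ ⟨s, rfl⟩
  exact (ultrafilter_isOpen_basic {y | s ∈ ν y}).preimage continuous_subtype_val

lemma denseRange_ufBind (h : ∀ s : Set X, s.Infinite → {y | s ∈ ν y}.Infinite) :
    DenseRange (ufBind ν hν) := by
  refine ((ultrafilterBasis_is_basis.isInducing IsInducing.subtypeVal).dense_iff).mpr ?_
  rintro _ ⟨_, ⟨s, rfl⟩, rfl⟩ ⟨V, hV⟩
  have hs : s.Infinite := fun hs => notMem_of_le_cofinite V.2 hs hV
  obtain ⟨U, hU⟩ := exists_freeUF_mem (h s hs)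
  exact ⟨_, hU, U, rfl⟩

lemma surjective_ufBind (h : ∀ s : Set X, s.Infinite → {y | s ∈ ν y}.Infinite) :
    Surjective (ufBind ν hν) := by
  have hclosed := (isCompact_range (continuous_ufBind hν)).isClosed
  rw [← range_eq_univ, ← hclosed.closure_eq]
  exact (denseRange_ufBind hν h).closure_range

lemma ufBind_ufMap {g : Y → Y} (hg : ∀ y, (g ⁻¹' {y}).Finite) {p : X → X}
    (hp : ∀ x, (p ⁻¹' {x}).Finite) (h : {y | Ultrafilter.map p (ν y) ≠ ν (g y)}.Finite)
    (U : FreeUF Y) : ufBind ν hν (ufMap g hg U) = ufMap p hp (ufBind ν hν U) := by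
  have hev : ∀ᶠ y in (U.1 : Filter Y), Ultrafilter.map p (ν y) = ν (g y) :=
    U.2 (eventually_cofinite.mpr h)
  refine Subtype.ext (Ultrafilter.ext fun s => ?_)
  change (∀ᶠ y in (U.1 : Filter Y), s ∈ ν (g y)) ↔
    ∀ᶠ y in (U.1 : Filter Y), s ∈ Ultrafilter.map p (ν y)
  exact eventually_congr (hev.mono fun y hy => by rw [hy])

namespace QuotientKernel

variable {Z : Type*} {g : Y → Y} {g' : Z → Z} {p : X → X} {S T : Set X}
  {ν' : Z → Ultrafilter X}

theorem exists_quotient (hg : ∀ y, (g ⁻¹' {y}).Finite) (hp : ∀ x, (p ⁻¹' {x}).Finite)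
    (h : QuotientKernel g p univ ν) :
    ∃ Q : FreeUF Y → FreeUF X, Continuous Q ∧ Surjective Q ∧
      ∀ U, Q (ufMap g hg U) = ufMap p hp (Q U) :=
  ⟨ufBind ν h.finite_singleton_mem, continuous_ufBind _,
    surjective_ufBind _ fun s hs => h.infinite_mem s (by rwa [inter_univ]),
    ufBind_ufMap _ hg hp h.finite_map_ne⟩

lemma mono (h : QuotientKernel g p S ν) (hST : (T \ S).Finite) : QuotientKernel g p T ν where
  finite_singleton_mem := h.finite_singleton_mem
  finite_map_ne := h.finite_map_ne
  infinite_mem s hs := h.infinite_mem s fun hfin =>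
    hs ((hfin.union hST).subset fun x ⟨hxs, hxT⟩ => by by_cases hxS : x ∈ S <;> simp_all)

lemma sumElim (h : QuotientKernel g p S ν) (h' : QuotientKernel g' p T ν') :
    QuotientKernel (Sum.map g g') p (S ∪ T) (Sum.elim ν ν') where
  finite_singleton_mem x :=
    finite_preimage_inl_and_inr.mp ⟨h.finite_singleton_mem x, h'.finite_singleton_mem x⟩
  finite_map_ne := finite_preimage_inl_and_inr.mp ⟨h.finite_map_ne, h'.finite_map_ne⟩
  infinite_mem s hs := by
    rw [inter_union_distrib_left, infinite_union] at hs
    rcases hs with hs | hs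
    · exact ((h.infinite_mem s hs).image Sum.inl_injective.injOn).mono
        (image_subset_iff.mpr le_rfl)
    · exact ((h'.infinite_mem s hs).image Sum.inr_injective.injOn).mono
        (image_subset_iff.mpr le_rfl)

end QuotientKernel

end UltrafilterBind

section ChainCoordinates

variable {α : Type*} {f : α → α} {D : Set α}

variable (f D) in
def ReachesIn (k : ℕ) (a b : α) : Prop := (∀ j < k, f^[j] a ∈ D) ∧ f^[k] a = b

lemma reachesIn_zero (a : α) : ReachesIn f D 0 a a := ⟨by simp, rfl⟩

lemma reachesIn_one {a : α} (ha : a ∈ D) : ReachesIn f D 1 a (f a) :=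
  ⟨by simpa using ha, rfl⟩

namespace ReachesIn

variable {k l : ℕ} {a b c : α}

lemma trans (hab : ReachesIn f D k a b) (hbc : ReachesIn f D l b c) :
    ReachesIn f D (k + l) a c := by
  refine ⟨fun j hj => ?_, by rw [add_comm, iterate_add_apply, hab.2, hbc.2]⟩
  rcases lt_or_ge j k with hjk | hjk
  · exact hab.1 j hjk
  · obtain ⟨i, rfl⟩ := Nat.exists_eq_add_of_le hjk
    rw [add_comm, iterate_add_apply, hab.2]
    exact hbc.1 i (by omega)

lemma split (h : ReachesIn f D (k + l) a c) :
    ReachesIn f D k a (f^[k] a) ∧ ReachesIn f D l (f^[k] a) c := by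
  refine ⟨⟨fun j hj => h.1 j (by omega), rfl⟩, fun j hj => ?_, ?_⟩
  · rw [← iterate_add_apply, add_comm]
    exact h.1 _ (by omega)
  · rw [← iterate_add_apply, add_comm, h.2]

lemma left_injective (hinj : InjOn f D) (hac : ReachesIn f D k a c)
    (hbc : ReachesIn f D k b c) : a = b := by
  induction k generalizing c with
  | zero => exact hac.2.trans hbc.2.symm
  | succ k ih =>
    refine ih (c := f^[k] a) ⟨fun j hj => hac.1 j (by omega), rfl⟩
      ⟨fun j hj => hbc.1 j (by omega), hinj (hbc.1 k (by omega)) (hac.1 k (by omega)) ?_⟩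
    rw [← iterate_succ_apply' f k b, ← iterate_succ_apply' f k a, hac.2, hbc.2]

lemma of_same_target (hinj : InjOn f D) (hac : ReachesIn f D k a c)
    (hbc : ReachesIn f D l b c) (hkl : k ≤ l) : ReachesIn f D (l - k) b a := by
  obtain ⟨hb, hc⟩ := (show ReachesIn f D (l - k + k) b c by rwa [Nat.sub_add_cancel hkl]).split
  rwa [left_injective hinj hc hac] at hb

lemma length_eq (hD : Disjoint D (periodicPts f)) (h₁ : ReachesIn f D k a b)
    (h₂ : ReachesIn f D l a b) : k = l := by
  wlog hkl : k < l generalizing k l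
  · rcases (not_lt.mp hkl).lt_or_eq with h | h
    · exact (this h₂ h₁ h).symm
    · exact h.symm
  refine absurd (mk_mem_periodicPts (n := l - k) (by omega) ?_)
    (hD.notMem_of_mem_left (h₁.2 ▸ h₂.1 k hkl))
  rw [IsPeriodicPt, IsFixedPt, ← h₁.2, ← iterate_add_apply, Nat.sub_add_cancel hkl.le, h₂.2, h₁.2]

end ReachesIn

variable (f D) in
def Offset (a b : α) (z : ℤ) : Prop :=
  ∃ c m n, ReachesIn f D m c a ∧ ReachesIn f D n c b ∧ (n : ℤ) - m = z

namespace Offset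

variable {a b d : α} {z w : ℤ}

lemma refl (a : α) : Offset f D a a 0 := ⟨a, 0, 0, reachesIn_zero a, reachesIn_zero a, rfl⟩

lemma symm (h : Offset f D a b z) : Offset f D b a (-z) := by
  obtain ⟨c, m, n, ha, hb, rfl⟩ := h
  exact ⟨c, n, m, hb, ha, by ring⟩

lemma trans (hinj : InjOn f D) (hab : Offset f D a b z) (hbd : Offset f D b d w) :
    Offset f D a d (z + w) := by
  obtain ⟨c, m, n, hca, hcb, rfl⟩ := hab
  obtain ⟨c', m', n', hc'b, hc'd, rfl⟩ := hbd
  rcases le_total n m' with h | h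
  · have hc'c := ReachesIn.of_same_target hinj hcb hc'b h
    exact ⟨c', m' - n + m, n', hc'c.trans hca, hc'd, by push_cast [h]; ring⟩
  · have hcc' := ReachesIn.of_same_target hinj hc'b hcb h
    exact ⟨c, m, n - m' + n', hca, hcc'.trans hc'd, by push_cast [h]; ring⟩

lemma step (h : Offset f D a b z) (hb : b ∈ D) : Offset f D a (f b) (z + 1) := by
  obtain ⟨c, m, n, hca, hcb, rfl⟩ := h
  exact ⟨c, m, n + 1, hca, hcb.trans (reachesIn_one hb), by push_cast; ring⟩

lemma eq_of_zero (h : Offset f D a b 0) : a = b := by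
  obtain ⟨c, m, n, hca, hcb, h⟩ := h
  obtain rfl : n = m := by omega
  exact hca.2.symm.trans hcb.2

lemma self_eq_zero (hD : Disjoint D (periodicPts f)) (h : Offset f D a a z) : z = 0 := by
  obtain ⟨c, m, n, hca, hca', rfl⟩ := h
  rw [hca.length_eq hD hca', sub_self]

lemma unique (hinj : InjOn f D) (hD : Disjoint D (periodicPts f)) (hz : Offset f D a b z)
    (hw : Offset f D a b w) : z = w := by
  have := (hz.symm.trans hinj hw).self_eq_zero hD
  omega

lemma right_injective (hinj : InjOn f D) (hb : Offset f D a b z) (hd : Offset f D a d z) :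
    b = d :=
  eq_of_zero (by simpa using hb.symm.trans hinj hd)

end Offset

variable (f D) in
def offsetSetoid (hinj : InjOn f D) : Setoid α where
  r a b := ∃ z, Offset f D a b z
  iseqv := ⟨fun a => ⟨0, .refl a⟩, fun ⟨z, h⟩ => ⟨-z, h.symm⟩,
    fun ⟨z, h⟩ ⟨w, h'⟩ => ⟨z + w, h.trans hinj h'⟩⟩

theorem exists_injective_shift_coordinates (hinj : InjOn f D) (hD : Disjoint D (periodicPts f)) :
    ∃ ψ : α → α × ℤ, Injective ψ ∧ ∀ a ∈ D, ψ (f a) = ((ψ a).1, (ψ a).2 + 1) := by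
  let s := offsetSetoid f D hinj
  choose grade hgrade using fun a => Quotient.mk_out (s := s) a
  refine ⟨fun a => ((Quotient.mk s a).out, grade a), fun a b hab => ?_, fun a ha => ?_⟩
  · obtain ⟨hrep, hgr⟩ := Prod.mk.inj hab
    have hb := hgrade b
    rw [← hgr, ← hrep] at hb
    exact (hgrade a).right_injective hinj hb
  · have hcls : Quotient.mk s (f a) = Quotient.mk s a :=
      Quotient.sound ⟨-1, by simpa using ((Offset.refl a).step ha).symm⟩
    have hfa := hgrade (f a)
    rw [hcls] at hfa
    simp only [hcls, ((hgrade a).step ha).unique hinj hD hfa]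

section Levels

def levelStart (π : ℕ → ℕ) (k : ℕ) : ℕ := ∑ j ∈ Finset.range (k + 1), (π j + 1)

lemma le_levelStart (π : ℕ → ℕ) (k : ℕ) : π k ≤ levelStart π k := by
  rw [levelStart, Finset.sum_range_succ]
  omega

lemma levelStart_strictMono (π : ℕ → ℕ) : StrictMono (levelStart π) :=
  strictMono_nat_of_lt_succ fun k => by
    rw [levelStart, levelStart, Finset.sum_range_succ _ (k + 1)]
    omega

def levelIndex (π : ℕ → ℕ) (n : ℕ) : ℕ := Nat.findGreatest (fun k => levelStart π k ≤ n) n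

lemma levelStart_levelIndex_le {π : ℕ → ℕ} {n : ℕ} (hn : levelStart π 0 ≤ n) :
    levelStart π (levelIndex π n) ≤ n :=
  Nat.findGreatest_spec (P := fun k => levelStart π k ≤ n) (Nat.zero_le n) hn

lemma levelIndex_levelStart (π : ℕ → ℕ) (k : ℕ) : levelIndex π (levelStart π k) = k :=
  le_antisymm
    ((levelStart_strictMono π).le_iff_le.mp
      (Nat.findGreatest_spec (P := fun j => levelStart π j ≤ levelStart π k)
        (levelStart_strictMono π).le_apply le_rfl))
    (Nat.le_findGreatest (P := fun j => levelStart π j ≤ levelStart π k)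
      (levelStart_strictMono π).le_apply le_rfl)

lemma finite_levelIndex_preimage (π : ℕ → ℕ) (k : ℕ) : (levelIndex π ⁻¹' {k}).Finite := by
  refine (finite_Iio (levelStart π (k + 1))).subset fun n (hn : levelIndex π n = k) => ?_
  by_contra h
  rw [mem_Iio, not_lt] at h
  have := Nat.le_findGreatest (P := fun j => levelStart π j ≤ n)
    ((levelStart_strictMono π).le_apply.trans h) h
  rw [levelIndex] at hn
  omega

end Levels

section PeriodicOrbits

variable {α : Type*} {f : α → α}

lemma finite_range_iterate {x : α} (hx : x ∈ periodicPts f) : (range fun k => f^[k] x).Finite :=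
  ((finite_Iio (minimalPeriod f x)).image fun k => f^[k] x).subset <| by
    rintro _ ⟨k, rfl⟩
    exact ⟨k % minimalPeriod f x, Nat.mod_lt _ (minimalPeriod_pos_of_mem_periodicPts hx),
      iterate_mod_minimalPeriod_eq⟩

lemma mem_range_iterate_of_iterate_eq {x z : α} (hz : z ∈ periodicPts f) {m : ℕ}
    (h : f^[m] z = x) : z ∈ range fun k => f^[k] x := by
  refine ⟨(minimalPeriod f z - 1) * m, ?_⟩
  have hL := minimalPeriod_pos_of_mem_periodicPts hz
  dsimp only
  rw [← h, ← iterate_add_apply, ← Nat.succ_mul, Nat.succ_eq_add_one, Nat.sub_add_cancel hL]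
  exact (isPeriodicPt_minimalPeriod f z).mul_const m

lemma apply_mem_image_compl {A : Set α} (hinj : InjOn f A) {n : α} (hn : n ∉ periodicPts f)
    (hfn : f n ∈ periodicPts f) : f n ∈ f '' Aᶜ := by
  obtain ⟨w, hw, hwn⟩ := (bijOn_periodicPts f).surjOn hfn
  by_cases hnA : n ∈ A
  · exact ⟨w, fun hwA => hn (hinj hwA hnA hwn ▸ hw), hwn⟩
  · exact ⟨n, hnA, rfl⟩

end PeriodicOrbits

section CyclePart

lemma finite_dr_level (n : ℕ) : {y : Dr | y.1.1 = n}.Finite :=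
  (((finite_singleton n).prod (finite_Iio n.factorial)).preimage
    Subtype.val_injective.injOn).subset fun y (hy : y.1.1 = n) => ⟨hy, hy ▸ y.2.2⟩

variable {p : ℕ → ℕ}

theorem exists_quotientKernel_rcyc (hP : (periodicPts p).Infinite) :
    ∃ ν : Dr → Ultrafilter ℕ, QuotientKernel rcyc p (periodicPts p) ν := by
  set e := Nat.nth (· ∈ periodicPts p)
  have he : ∀ k, e k ∈ periodicPts p := Nat.nth_mem_of_infinite hP
  set π := fun k => minimalPeriod p (e k)
  let φ (y : Dr) : ℕ := p^[y.1.2] (e (levelIndex π y.1.1))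
  have hφ : ∀ y, φ y ∈ periodicPts p := fun y => (bijOn_periodicPts p).mapsTo.iterate _ (he _)
  refine ⟨fun y => pure (φ y), ⟨fun x => ?_, ?_, fun s hs => ?_⟩⟩
  · simp only [Ultrafilter.mem_pure, mem_singleton_iff]
    by_cases hx : x ∈ periodicPts p
    · refine ((((finite_range_iterate hx).preimage (Nat.nth_injective hP).injOn).preimage'
        fun k _ => finite_levelIndex_preimage π k).preimage' fun n _ => finite_dr_level n).subset
        fun y hy => mem_range_iterate_of_iterate_eq (he _) hy
    · exact finite_empty.subset fun y hy => hx (hy ▸ hφ y)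
  · refine ((finite_Iio (levelStart π 0)).preimage' fun n _ => finite_dr_level n).subset
      fun ⟨⟨n, m⟩, hn⟩ hy => ?_
    by_contra! hN
    simp only [mem_preimage, mem_Iio, not_lt] at hN
    refine hy (congrArg pure ?_)
    have hdvd : π (levelIndex π n) ∣ n.factorial :=
      Nat.dvd_factorial (minimalPeriod_pos_of_mem_periodicPts (he _))
        ((le_levelStart π _).trans (levelStart_levelIndex_le hN))
    simp only [φ, rcyc, ((isPeriodicPt_minimalPeriod p _).trans_dvd hdvd).iterate_mod_apply,
      iterate_succ_apply']
  · refine Infinite.preimage' (hs.mono (inter_subset_inter_right s fun x hx => ?_))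
    obtain ⟨k, rfl⟩ : x ∈ range e := (Nat.range_nth_of_infinite hP).symm ▸ hx
    have hk := minimalPeriod_pos_of_mem_periodicPts (he k)
    refine ⟨⟨(levelStart π k, 0), (hk.trans_le (le_levelStart π k)), Nat.factorial_pos _⟩, ?_⟩
    simp only [φ, levelIndex_levelStart, iterate_zero_apply]

end CyclePart

section ShiftPart

variable {p : ℕ → ℕ} {ψ : ℕ → ℕ × ℤ} {σ : Equiv.Perm (FreeUF ℕ)} {W : FreeUF ℕ}

variable (p ψ σ W) in
noncomputable def shiftKernel : ℕ × ℤ → Ultrafilter ℕ :=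
  extend (fun n : ↥(periodicPts p)ᶜ => ψ n) (fun n => pure n.1) fun y => ((σ ^ y.2) W).1

lemma shiftKernel_apply (hψ : Injective ψ) {n : ℕ} (hn : n ∉ periodicPts p) :
    shiftKernel p ψ σ W (ψ n) = pure n :=
  (hψ.comp Subtype.val_injective).extend_apply _ _ (⟨n, hn⟩ : ↥(periodicPts p)ᶜ)

lemma shiftKernel_apply_of_notMem {y : ℕ × ℤ} (hy : y ∉ ψ '' (periodicPts p)ᶜ) :
    shiftKernel p ψ σ W y = ((σ ^ y.2) W).1 :=
  extend_apply' _ _ _ fun ⟨n, hn⟩ => hy ⟨n, n.2, hn⟩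

lemma finite_shiftKernel_map_ne {A B : Set ℕ} (hp : ∀ n, (p ⁻¹' {n}).Finite)
    (hA : Aᶜ.Finite) (hB : Bᶜ.Finite) (hAB : BijOn p A B) (hψ : Injective ψ)
    (hψp : ∀ n ∈ A \ periodicPts p, ψ (p n) = tmap (ψ n)) (hσ : ∀ V, σ V = ufMap p hp V) :
    {y | Ultrafilter.map p (shiftKernel p ψ σ W y) ≠ shiftKernel p ψ σ W (tmap y)}.Finite := by
  -- Commutation can fail only where a chain ends (outside `A`, or by entering the periodic
  -- part) or just before a chain starts (outside `B`).
  refine ((((hA.image p).preimage' fun n _ => hp n).image ψ).union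
    ((hB.image ψ).preimage tmap_injective.injOn)).subset fun y hy => ?_
  by_cases hy' : y ∈ ψ '' (periodicPts p)ᶜ
  · obtain ⟨n, hn, rfl⟩ := hy'
    refine .inl ⟨n, of_not_not fun hn' => hy ?_, rfl⟩
    have hnA : n ∈ A := of_not_not fun hnA => hn' ⟨n, hnA, rfl⟩
    have hpn : p n ∉ periodicPts p := fun hpn => hn' (apply_mem_image_compl hAB.injOn hn hpn)
    rw [shiftKernel_apply hψ hn, Ultrafilter.map_pure, ← hψp n ⟨hnA, hn⟩,
      shiftKernel_apply hψ hpn]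
  by_cases hty : tmap y ∈ ψ '' (periodicPts p)ᶜ
  · obtain ⟨m, hm, hmy⟩ := hty
    refine .inr ⟨m, fun hmB => ?_, hmy⟩
    obtain ⟨n, hnA, rfl⟩ := hAB.surjOn hmB
    have hn : n ∉ periodicPts p := fun hn => hm ((bijOn_periodicPts p).mapsTo hn)
    exact hy' ⟨n, hn, tmap_injective (by rw [← hψp n ⟨hnA, hn⟩, hmy])⟩
  · refine absurd ?_ hy
    rw [shiftKernel_apply_of_notMem hy', shiftKernel_apply_of_notMem hty]
    change _ = ((σ ^ (y.2 + 1)) W).1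
    rw [add_comm, zpow_add, zpow_one, Equiv.Perm.mul_apply, hσ]
    rfl

lemma quotientKernel_shiftKernel {A B : Set ℕ} (hp : ∀ n, (p ⁻¹' {n}).Finite)
    (hA : Aᶜ.Finite) (hB : Bᶜ.Finite) (hAB : BijOn p A B) (hψ : Injective ψ)
    (hψp : ∀ n ∈ A \ periodicPts p, ψ (p n) = tmap (ψ n)) (hσ : ∀ V, σ V = ufMap p hp V) :
    QuotientKernel tmap p (periodicPts p)ᶜ (shiftKernel p ψ σ W) where
  finite_singleton_mem x := (finite_singleton (ψ x)).subset
      fun y (hy : ({x} : Set ℕ) ∈ shiftKernel p ψ σ W y) => by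
    by_cases hy' : y ∈ ψ '' (periodicPts p)ᶜ
    · obtain ⟨n, hn, rfl⟩ := hy'
      rw [shiftKernel_apply hψ hn, Ultrafilter.mem_pure, mem_singleton_iff] at hy
      rw [hy, mem_singleton_iff]
    · rw [shiftKernel_apply_of_notMem hy'] at hy
      exact absurd hy (notMem_of_le_cofinite ((σ ^ y.2) W).2 (finite_singleton x))
  finite_map_ne := finite_shiftKernel_map_ne hp hA hB hAB hψ hψp hσ
  infinite_mem s hs := (hs.image hψ.injOn).mono <| by
    rintro _ ⟨n, ⟨hns, hn⟩, rfl⟩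
    rw [mem_ofPred_eq, shiftKernel_apply hψ hn]
    exact hns

end ShiftPart

theorem exists_quotientKernel_tmap {p : ℕ → ℕ} (hp : ∀ n, (p ⁻¹' {n}).Finite) {A B : Set ℕ}
    (hA : Aᶜ.Finite) (hB : Bᶜ.Finite) (hAB : BijOn p A B) :
    ∃ ν : ℕ × ℤ → Ultrafilter ℕ, QuotientKernel tmap p (periodicPts p)ᶜ ν := by
  obtain ⟨ψ, hψ, hψp⟩ := exists_injective_shift_coordinates (hAB.injOn.mono sdiff_subset)
    disjoint_sdiff_left
  have hinv := hAB.invOn_invFunOn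
  have hq : ∀ n, (invFunOn p A ⁻¹' {n}).Finite := fun n =>
    (hB.insert (p n)).subset fun m (hm : invFunOn p A m = n) => by
      by_cases hmB : m ∈ B
      · exact .inl (hm ▸ (hinv.2 hmB).symm)
      · exact .inr hmB
  let σ := ufMapPerm hp hq (eventually_cofinite.mpr (hA.subset fun n hn hnA => hn (hinv.1 hnA)))
    (eventually_cofinite.mpr (hB.subset fun n hn hnB => hn (hinv.2 hnB)))
  exact ⟨_, quotientKernel_shiftKernel (W := ⟨hyperfilter ℕ, hyperfilter_le_cofinite⟩) hp hA hB
    hAB hψ hψp (σ := σ) fun _ => rfl⟩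

/-- (ZFC) Every trivial autohomeomorphism of `ℕ*` is a quotient of `t*` or of `(t ∨ r)*`:
for every mod-finite permutation `p` of `ℕ`, either `p*` is a quotient of the trivial map
induced by `t(n,z) = (n,z+1)` on `(ℕ × ℤ)*`, or `p*` is a quotient of the trivial map
induced by `t ∨ r` on `((ℕ × ℤ) ⊔ D_r)*`. -/
theorem trivial_embeds_in_t_or_tvr
    (p : ℕ → ℕ) (hp : ∀ n : ℕ, (p ⁻¹' {n}).Finite)
    (hperm : ∃ A B : Set ℕ, Aᶜ.Finite ∧ Bᶜ.Finite ∧ Set.BijOn p A B) :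
    (∃ Q : FreeUF (ℕ × ℤ) → FreeUF ℕ, Continuous Q ∧ Function.Surjective Q ∧
        ∀ U, Q (ufMap tmap (finiteToOne_of_injective tmap_injective) U)
          = ufMap p hp (Q U)) ∨
    (∃ Q : FreeUF ((ℕ × ℤ) ⊕ Dr) → FreeUF ℕ, Continuous Q ∧ Function.Surjective Q ∧
        ∀ U, Q (ufMap (Sum.map tmap rcyc)
            (finiteToOne_of_injective (tmap_injective.sumMap rcyc_injective)) U)
          = ufMap p hp (Q U)) := by
  obtain ⟨A, B, hA, hB, hAB⟩ := hperm
  obtain ⟨ν, hν⟩ := exists_quotientKernel_tmap hp hA hB hAB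
  by_cases hP : (periodicPts p).Finite
  · exact .inl ((hν.mono (by simpa using hP)).exists_quotient _ hp)
  · obtain ⟨ν', hν'⟩ := exists_quotientKernel_rcyc hP
    exact .inr (((hν.sumElim hν').mono (by simp)).exists_quotient _ hp)
end ChainCoordinates
end

section
/- Let Y be a compact Hausdorff space, X ⊆ Y a closed subspace, f : X → X a continuous map, D a countably infinite set, and (y_d)_{d∈D}, (z_d)_{d∈D} two D-indexed sequences of points in Y. Then the following are equivalent: (1) for every open cover O of Y, for all but finitely many d ∈ D there exists x ∈ X with x ≈_O y_d and f(x) ≈_O z_d; (2) for every free ultrafilter U on D, both U-lim y_d and U-lim z_d belong to X, and f(U-lim y_d) = U-lim z_d. -/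
open Filter Topology

/-- `a ≈_O b`: some member of `O` contains both `a` and `b`. -/
def ApproxCover {Y : Type*} (O : Set (Set Y)) (a b : Y) : Prop := ∃ U ∈ O, a ∈ U ∧ b ∈ U

/-- `O` is an open cover of `Y`. -/
def IsOpenCover {Y : Type*} [TopologicalSpace Y] (O : Set (Set Y)) : Prop :=
  (∀ U ∈ O, IsOpen U) ∧ ∀ y : Y, ∃ U ∈ O, y ∈ U

/-- Let `Y` be compact Hausdorff, `X ⊆ Y` closed, `f : X → X` continuous, and let
`(y_d)`, `(z_d)` be `D`-indexed sequences in `Y`.  Then: for every open cover `O` of `Y`,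
for all but finitely many `d` there is `x ∈ X` with `x ≈_O y_d` and `f x ≈_O z_d`  ⟺  for
every free ultrafilter `U` on `D`, the `U`-limits `a` of `(y_d)` and `b` of `(z_d)` both lie
in `X` and `f a = b`. -/
theorem ulimit_mod_cover_criterion
    (Y : Type) [TopologicalSpace Y] [CompactSpace Y] [T2Space Y]
    (X : Set Y) (hX : IsClosed X) (f : X → X) (hf : Continuous f)
    (D : Type) [Countable D] [Infinite D] (y z : D → Y) :
    (∀ O : Set (Set Y), IsOpenCover O →
        {d : D | ¬ ∃ x : X, ApproxCover O (x : Y) (y d) ∧ ApproxCover O (f x : Y) (z d)}.Finite)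
      ↔
    (∀ U : Ultrafilter D, (U : Filter D) ≤ Filter.cofinite →
        ∃ a b : X, Filter.Tendsto y (U : Filter D) (nhds (a : Y)) ∧
          Filter.Tendsto z (U : Filter D) (nhds (b : Y)) ∧ f a = b) := by
  haveI : CompactSpace X := isCompact_iff_compactSpace.mp (hX.isCompact)
  -- the graph-like map
  set g : X → Y × Y := fun x => ((x : Y), ((f x : X) : Y)) with hg
  have hgc : Continuous g := continuous_subtype_val.prodMk (continuous_subtype_val.comp hf)
  have hKcl : IsClosed (Set.range g) := (isCompact_range hgc).isClosed
  constructor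
  · intro hcov U hU
    -- limits exist by compactness
    obtain ⟨a', -, hay⟩ := isCompact_univ.ultrafilter_le_nhds (U.map y)
      (by simp [Filter.le_principal_iff])
    obtain ⟨b', -, hbz⟩ := isCompact_univ.ultrafilter_le_nhds (U.map z)
      (by simp [Filter.le_principal_iff])
    have hty : Filter.Tendsto y (U : Filter D) (nhds a') := hay
    have htz : Filter.Tendsto z (U : Filter D) (nhds b') := hbz
    have hmem : (a', b') ∈ Set.range g := by
      by_contra hnot
      -- get an open rectangle around (a',b') missing the graph
      have hnb : (Set.range g)ᶜ ∈ nhds (a', b') := hKcl.isOpen_compl.mem_nhds hnot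
      rw [mem_nhds_prod_iff'] at hnb
      obtain ⟨A, B, hAo, haA, hBo, hbB, hAB⟩ := hnb
      -- shrink to closed neighborhoods
      obtain ⟨sA, hsA, hsAcl, hsAsub⟩ :=
        exists_mem_nhds_isClosed_subset (hAo.mem_nhds haA)
      obtain ⟨sB, hsB, hsBcl, hsBsub⟩ :=
        exists_mem_nhds_isClosed_subset (hBo.mem_nhds hbB)
      -- the cover
      set O : Set (Set Y) := {A ∩ B, A ∩ sBᶜ, sAᶜ ∩ B, sAᶜ ∩ sBᶜ} with hO
      have hOopen : IsOpenCover O := by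
        constructor
        · intro V hV
          rcases hV with h | h | h | h <;> subst h
          · exact hAo.inter hBo
          · exact hAo.inter hsBcl.isOpen_compl
          · exact hsAcl.isOpen_compl.inter hBo
          · exact hsAcl.isOpen_compl.inter hsBcl.isOpen_compl
        · intro p
          by_cases hpA : p ∈ A <;> by_cases hpB : p ∈ B
          · exact ⟨A ∩ B, by simp [hO], hpA, hpB⟩
          · refine ⟨A ∩ sBᶜ, by simp [hO], hpA, fun hp => hpB (hsBsub hp)⟩
          · refine ⟨sAᶜ ∩ B, by simp [hO], fun hp => hpA (hsAsub hp), hpB⟩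
          · exact ⟨sAᶜ ∩ sBᶜ, by simp [hO], fun hp => hpA (hsAsub hp),
              fun hp => hpB (hsBsub hp)⟩
      have hfin := hcov O hOopen
      have hGood : {d : D | ∃ x : X, ApproxCover O (x : Y) (y d) ∧
          ApproxCover O (f x : Y) (z d)} ∈ (U : Filter D) := by
        have : {d : D | ¬ ∃ x : X, ApproxCover O (x : Y) (y d) ∧
            ApproxCover O (f x : Y) (z d)}ᶜ ∈ (U : Filter D) :=
          hU hfin.compl_mem_cofinite
        simpa only [Set.compl_setOf, not_not] using this
      have hyA : {d : D | y d ∈ interior sA} ∈ (U : Filter D) :=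
        hty (isOpen_interior.mem_nhds (mem_interior_iff_mem_nhds.mpr hsA))
      have hzB : {d : D | z d ∈ interior sB} ∈ (U : Filter D) :=
        htz (isOpen_interior.mem_nhds (mem_interior_iff_mem_nhds.mpr hsB))
      obtain ⟨d, ⟨⟨hd1, hd2⟩, hd3⟩⟩ :=
        Filter.nonempty_of_mem (Filter.inter_mem (Filter.inter_mem hGood hyA) hzB)
      obtain ⟨x, ⟨M, hMO, hxM, hyM⟩, ⟨N, hNO, hfxN, hzN⟩⟩ := hd1
      -- any member of O meeting sA is contained in A, similarly for B
      have hMA : (x : Y) ∈ A := by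
        have hysA : y d ∈ sA := interior_subset hd2
        rcases hMO with h | h | h | h <;> subst h
        · exact hxM.1
        · exact hxM.1
        · exact absurd hysA hyM.1
        · exact absurd hysA hyM.1
      have hNB : ((f x : X) : Y) ∈ B := by
        have hzsB : z d ∈ sB := interior_subset hd3
        rcases hNO with h | h | h | h <;> subst h
        · exact hfxN.2
        · exact absurd hzsB hzN.2
        · exact hfxN.2
        · exact absurd hzsB hzN.2
      exact hAB (Set.mk_mem_prod hMA hNB) ⟨x, rfl⟩
    obtain ⟨x, hx⟩ := hmem
    have hx1 : (x : Y) = a' := congrArg Prod.fst hx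
    have hx2 : ((f x : X) : Y) = b' := congrArg Prod.snd hx
    refine ⟨x, f x, ?_, ?_, rfl⟩
    · rw [hx1]; exact hty
    · rw [hx2]; exact htz
  · intro hult O hOc
    by_contra hinf
    set S : Set D := {d : D | ¬ ∃ x : X, ApproxCover O (x : Y) (y d) ∧
        ApproxCover O (f x : Y) (z d)} with hS
    have hSinf : S.Infinite := hinf
    -- a free ultrafilter containing S
    have hne : (Filter.cofinite ⊓ Filter.principal S).NeBot := by
      rw [Filter.inf_principal_neBot_iff]
      intro V hV
      have : (S \ Vᶜ).Infinite := hSinf.diff hV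
      obtain ⟨d, hd⟩ := this.nonempty
      exact ⟨d, not_not.mp hd.2, hd.1⟩
    set U : Ultrafilter D := Ultrafilter.of (Filter.cofinite ⊓ Filter.principal S) with hUdef
    have hUle : (U : Filter D) ≤ Filter.cofinite ⊓ Filter.principal S :=
      Ultrafilter.of_le _
    have hUcof : (U : Filter D) ≤ Filter.cofinite := hUle.trans inf_le_left
    have hSU : S ∈ (U : Filter D) := hUle (le_principal_iff.mp inf_le_right)
    obtain ⟨a, b, hty, htz, hfab⟩ := hult U hUcof
    obtain ⟨V, hVO, haV⟩ := hOc.2 (a : Y)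
    obtain ⟨W, hWO, hbW⟩ := hOc.2 ((b : X) : Y)
    have hyV : {d : D | y d ∈ V} ∈ (U : Filter D) := hty ((hOc.1 V hVO).mem_nhds haV)
    have hzW : {d : D | z d ∈ W} ∈ (U : Filter D) := htz ((hOc.1 W hWO).mem_nhds hbW)
    obtain ⟨d, ⟨⟨hd1, hd2⟩, hd3⟩⟩ :=
      Filter.nonempty_of_mem (Filter.inter_mem (Filter.inter_mem hSU hyV) hzW)
    exact hd1 ⟨a, ⟨V, hVO, haV, hd2⟩, ⟨W, hWO, by rw [hfab]; exact hbW, hd3⟩⟩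
end
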